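/- arXiv:1506.00138 — 3 statements merged into one kernel-verified Lean document; each statement's English description precedes it below -/
import Mathlib

section
/- Let Σ be a real symmetric positive definite matrix of size (m+n)×(m+n), Q = Σ⁻¹, σ² ≥ 0 a real scalar, A = I + σ²Q, and B = A⁻¹, with Σ, Q, A, B all partitioned conformally into blocks indexed 11, 12, 21, 22 where the 11 blocks are m×m. Then det(Σ + σ²I) = det(Σ) · det(A₂₂) / det(B₁₁). (Paper's Proposition 3(a).) -/
/-!
Since `S + σ²I = S A`, the claim is `det A = det A₂₂ / det B₁₁`. This is Jacobi's complementary
minor identity `det A · det (A⁻¹)₁₁ = det A₂₂`, and positive definiteness of `A` makes `det A₂₂`,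
hence `det B₁₁`, nonzero.
-/

open Matrix

variable {m n R : Type*} [Fintype m] [Fintype n] [DecidableEq m] [DecidableEq n] [CommRing R]

theorem Matrix.det_mul_det_toBlocks₁₁_of_mul_eq_one {A B : Matrix (m ⊕ n) (m ⊕ n) R}
    (hAB : A * B = 1) : A.det * B.toBlocks₁₁.det = A.toBlocks₂₂.det := by
  -- `A` sends the first block column of `B` to that of `1`, and `[0; 1]` to the second of `A`.
  have hprod : A * fromBlocks B.toBlocks₁₁ 0 B.toBlocks₂₁ 1 =
      fromBlocks 1 A.toBlocks₁₂ 0 A.toBlocks₂₂ := by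
    rw [← fromBlocks_toBlocks A, ← fromBlocks_toBlocks B, ← fromBlocks_one, fromBlocks_multiply,
      fromBlocks_inj] at hAB
    rw [← fromBlocks_toBlocks A, fromBlocks_multiply, hAB.1, hAB.2.2.1]
    simp
  simpa [det_fromBlocks_zero₁₂, det_fromBlocks_zero₂₁] using congrArg det hprod

theorem det_add_smul_one_eq_det_mul_det_div_det_general
    (m n : ℕ) (S : Matrix (Fin m ⊕ Fin n) (Fin m ⊕ Fin n) ℝ)
    (hpd : S.PosDef) (σsq : ℝ) (hσ : 0 ≤ σsq)
    (A B : Matrix (Fin m ⊕ Fin n) (Fin m ⊕ Fin n) ℝ)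
    (hA : A = 1 + σsq • S⁻¹) (hB : B = A⁻¹) :
    (S + σsq • (1 : Matrix (Fin m ⊕ Fin n) (Fin m ⊕ Fin n) ℝ)).det =
      S.det * (A.toBlocks₂₂).det / (B.toBlocks₁₁).det := by
  have hApd : A.PosDef := hA ▸ PosDef.one.add_posSemidef (hpd.inv.posSemidef.smul hσ)
  have hA₂₂ : A.toBlocks₂₂.det ≠ 0 :=
    (hApd.submatrix Sum.inr_injective).det_pos.ne'
  have hjacobi : A.det * B.toBlocks₁₁.det = A.toBlocks₂₂.det :=
    det_mul_det_toBlocks₁₁_of_mul_eq_one (hB ▸ mul_nonsing_inv A hApd.det_pos.ne'.isUnit)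
  have hB₁₁ : B.toBlocks₁₁.det ≠ 0 := right_ne_zero_of_mul (hjacobi ▸ hA₂₂)
  have hSA : S + σsq • 1 = S * A := by
    rw [hA, Matrix.mul_add, Matrix.mul_one, Matrix.mul_smul,
      mul_nonsing_inv S hpd.det_pos.ne'.isUnit]
  rw [hSA, det_mul, ← hjacobi, mul_div_assoc, mul_div_cancel_right₀ _ hB₁₁]

/-- Paper's Proposition 3(a): for a real symmetric positive definite matrix `S` (denoted
Σ in the paper) of size (m+n)×(m+n), with `Q = S⁻¹`, a real scalar `σ² ≥ 0`,
`A = I + σ²Q` and `B = A⁻¹`, all partitioned conformally into blocks where the 11 blocks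
are m×m, one has `det(S + σ²I) = det(S) · det(A₂₂) / det(B₁₁)`. -/
theorem det_add_smul_one_eq_det_mul_det_div_det
    (m n : ℕ) (S : Matrix (Fin m ⊕ Fin n) (Fin m ⊕ Fin n) ℝ)
    (hsym : S.IsSymm) (hpd : S.PosDef) (σsq : ℝ) (hσ : 0 ≤ σsq)
    (A B : Matrix (Fin m ⊕ Fin n) (Fin m ⊕ Fin n) ℝ)
    (hA : A = 1 + σsq • S⁻¹) (hB : B = A⁻¹) :
    (S + σsq • (1 : Matrix (Fin m ⊕ Fin n) (Fin m ⊕ Fin n) ℝ)).det =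
      S.det * (A.toBlocks₂₂).det / (B.toBlocks₁₁).det :=
  det_add_smul_one_eq_det_mul_det_div_det_general m n S hpd σsq hσ A B hA hB
end

section
/- Let S ⊂ ℤ² be a finite set, η : S → ℝ coefficients, and δ > 0, such that for every ω ∈ ℝ² the trigonometric sum g(ω) = Σ_{h∈S} η(h)·exp(i(ω₁h₁ + ω₂h₂)) is real-valued and satisfies g(ω) ≥ δ, and set f(ω) = 1/g(ω). For h ∈ ℤ² define K(h) = ∫_{[0,2π]²} f(ω)·exp(i(ω₁h₁ + ω₂h₂)) dω, and for positive integers n₁, n₂, J define the Riemann-sum approximation K(h; J, n) = (4π²/(n₁n₂J²)) · Σ_{j₁=0}^{n₁J−1} Σ_{j₂=0}^{n₂J−1} f(2πj₁/(n₁J), 2πj₂/(n₂J)) · exp(i(2πj₁h₁/(n₁J) + 2πj₂h₂/(n₂J))). Then for every natural number p ≥ 1 there exists a constant C_p < ∞, depending only on f and p, such that for all positive integers n₁ ≤ n₂, all integers J ≥ 2, and all h ∈ ℤ² with |h₁| ≤ n₁ and |h₂| ≤ n₂, we have |K(h) − K(h; J, n)| ≤ C_p / (n₁J)^p. (Paper's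 Theorem 1: the FFT-based covariance computation for a stationary Markov random field with bounded spectral density converges faster than any polynomial rate.) -/
/-!
With `N = (n₁J, n₂J)`, the error `K(h) − K(h; J, n)` is `4π²` times the difference between the mean
of `e_h / g` over `[0, 2π]²` and its mean over the `N₁ × N₂` grid, where `e_h(ω) = exp(i h·ω)`.
By discrete orthogonality of characters the two means agree on trigonometric polynomials of degree
`< N`. Since `g` is real with `δ ≤ g ≤ B`, it equals `M (1 - u)` with `‖u‖ ≤ θ < 1`, so
`1/g = M⁻¹ ∑_{r<R} u^r + u^R/g` splits `e_h / g` into a trigonometric polynomial of degree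
`R · deg g + |h|` and a remainder bounded by `θ^R / δ`. Taking `R` proportional to `n₁J` keeps the
degree below `N` and makes the error `O(θ^{c n₁ J})`, which beats every power of `n₁J`.
-/

open Real MeasureTheory Finset Filter Topology
open Complex (I)

noncomputable section

def trigMonomial (k : ℤ × ℤ) (ω : ℝ × ℝ) : ℂ :=
  Complex.exp (I * ((k.1 : ℝ) * ω.1 + (k.2 : ℝ) * ω.2))

lemma continuous_trigMonomial (k : ℤ × ℤ) : Continuous (trigMonomial k) := by
  unfold trigMonomial; fun_prop

lemma norm_trigMonomial (k : ℤ × ℤ) (ω : ℝ × ℝ) : ‖trigMonomial k ω‖ = 1 := by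
  simpa [trigMonomial] using Complex.norm_exp_I_mul_ofReal (k.1 * ω.1 + k.2 * ω.2)

lemma trigMonomial_zero : trigMonomial 0 = 1 := by
  ext ω; simp [trigMonomial]

lemma trigMonomial_add (k m : ℤ × ℤ) :
    trigMonomial (k + m) = trigMonomial k * trigMonomial m := by
  ext ω
  simp only [trigMonomial, Pi.mul_apply, ← Complex.exp_add, Prod.fst_add, Prod.snd_add]
  push_cast; ring_nf

lemma trigMonomial_apply (k : ℤ × ℤ) (ω : ℝ × ℝ) :
    trigMonomial k ω = Complex.exp (I * (k.1 * ω.1)) * Complex.exp (I * (k.2 * ω.2)) := by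
  rw [trigMonomial, ← Complex.exp_add]; push_cast; ring_nf

lemma sum_range_exp_I_int_mul_eq_zero {N : ℕ} {k : ℤ} (hk : ¬ (N : ℤ) ∣ k) :
    ∑ j ∈ range N, Complex.exp (I * (k * ((2 * π * j / N : ℝ) : ℂ))) = 0 := by
  rcases N.eq_zero_or_pos with rfl | hN
  · simp
  have hζ := Complex.isPrimitiveRoot_exp N hN.ne'
  set ζ := Complex.exp (2 * π * I / N)
  have hx : ζ ^ k ≠ 1 := mt (hζ.zpow_eq_one_iff_dvd k).1 hk
  have hterm : ∀ j : ℕ, Complex.exp (I * (k * ((2 * π * j / N : ℝ) : ℂ))) = (ζ ^ k) ^ j := by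
    intro j
    rw [← zpow_natCast, ← zpow_mul, ← Complex.exp_int_mul]
    push_cast; ring_nf
  simp_rw [hterm]
  rw [geom_sum_eq hx, ← zpow_natCast, ← zpow_mul, mul_comm, zpow_mul, zpow_natCast,
    hζ.pow_eq_one, one_zpow, sub_self, zero_div]

lemma average_range_exp_I_int_mul {N : ℕ} {k : ℤ} (hk : |k| < N) :
    (N : ℂ)⁻¹ * ∑ j ∈ range N, Complex.exp (I * (k * ((2 * π * j / N : ℝ) : ℂ))) =
      if k = 0 then 1 else 0 := by
  split_ifs with h0
  · have hN : 0 < N := by simpa [h0] using hk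
    simp [h0, hN.ne']
  · rw [sum_range_exp_I_int_mul_eq_zero fun hdvd => h0 (Int.eq_zero_of_abs_lt_dvd hdvd hk),
      mul_zero]

lemma setIntegral_exp_I_int_mul_eq_zero {k : ℤ} (hk : k ≠ 0) :
    ∫ t in Set.Icc (0 : ℝ) (2 * π), Complex.exp (I * (k * t)) = 0 := by
  have hc : I * k ≠ 0 := mul_ne_zero Complex.I_ne_zero (by exact_mod_cast hk)
  rw [integral_Icc_eq_integral_Ioc, ← intervalIntegral.integral_of_le (by positivity)]
  simp_rw [← mul_assoc]
  rw [integral_exp_mul_complex hc, div_eq_zero_iff, sub_eq_zero]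
  left
  rw [Complex.ofReal_zero, mul_zero, Complex.exp_zero, ← Complex.exp_int_mul_two_pi_mul_I k]
  push_cast; ring_nf

lemma average_setIntegral_exp_I_int_mul (k : ℤ) :
    (2 * (π : ℂ))⁻¹ * ∫ t in Set.Icc (0 : ℝ) (2 * π), Complex.exp (I * (k * t)) =
      if k = 0 then 1 else 0 := by
  split_ifs with h0
  · have : (π : ℂ) ≠ 0 := by exact_mod_cast pi_ne_zero
    simp [h0, Real.volume_Icc, measureReal_def, Complex.real_smul, pi_nonneg]
    field_simp
  · rw [setIntegral_exp_I_int_mul_eq_zero h0, mul_zero]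

def gridMean (N₁ N₂ : ℕ) (φ : ℝ × ℝ → ℂ) : ℂ :=
  ((N₁ : ℂ) * N₂)⁻¹ *
    ∑ j₁ ∈ range N₁, ∑ j₂ ∈ range N₂, φ (2 * π * j₁ / N₁, 2 * π * j₂ / N₂)

def boxMean (φ : ℝ × ℝ → ℂ) : ℂ :=
  (4 * (π : ℂ) ^ 2)⁻¹ * ∫ ω in Set.Icc (0 : ℝ) (2 * π) ×ˢ Set.Icc (0 : ℝ) (2 * π), φ ω

lemma gridMean_add (N₁ N₂ : ℕ) (φ ψ : ℝ × ℝ → ℂ) :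
    gridMean N₁ N₂ (φ + ψ) = gridMean N₁ N₂ φ + gridMean N₁ N₂ ψ := by
  simp only [gridMean, Pi.add_apply, sum_add_distrib, mul_add]

lemma gridMean_smul (N₁ N₂ : ℕ) (c : ℂ) (φ : ℝ × ℝ → ℂ) :
    gridMean N₁ N₂ (c • φ) = c * gridMean N₁ N₂ φ := by
  simp only [gridMean, Pi.smul_apply, smul_eq_mul, ← mul_sum]
  ring

lemma boxMean_add {φ ψ : ℝ × ℝ → ℂ}
    (hφ : IntegrableOn φ (Set.Icc (0 : ℝ) (2 * π) ×ˢ Set.Icc (0 : ℝ) (2 * π)))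
    (hψ : IntegrableOn ψ (Set.Icc (0 : ℝ) (2 * π) ×ˢ Set.Icc (0 : ℝ) (2 * π))) :
    boxMean (φ + ψ) = boxMean φ + boxMean ψ := by
  simp only [boxMean, Pi.add_apply, integral_add hφ hψ, mul_add]

lemma boxMean_smul (c : ℂ) (φ : ℝ × ℝ → ℂ) : boxMean (c • φ) = c * boxMean φ := by
  simp only [boxMean, Pi.smul_apply, smul_eq_mul, integral_const_mul]
  ring

lemma integrableOn_box {φ : ℝ × ℝ → ℂ} (hφ : Continuous φ) :
    IntegrableOn φ (Set.Icc (0 : ℝ) (2 * π) ×ˢ Set.Icc (0 : ℝ) (2 * π)) :=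
  hφ.continuousOn.integrableOn_compact (isCompact_Icc.prod isCompact_Icc)

lemma gridMean_trigMonomial {N₁ N₂ : ℕ} (k : ℤ × ℤ) :
    gridMean N₁ N₂ (trigMonomial k) =
      ((N₁ : ℂ)⁻¹ * ∑ j ∈ range N₁, Complex.exp (I * (k.1 * ((2 * π * j / N₁ : ℝ) : ℂ)))) *
      ((N₂ : ℂ)⁻¹ * ∑ j ∈ range N₂, Complex.exp (I * (k.2 * ((2 * π * j / N₂ : ℝ) : ℂ)))) := by
  rw [mul_mul_mul_comm, ← mul_inv, sum_mul_sum]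
  simp only [gridMean, trigMonomial_apply]

lemma boxMean_trigMonomial (k : ℤ × ℤ) :
    boxMean (trigMonomial k) =
      ((2 * (π : ℂ))⁻¹ * ∫ t in Set.Icc (0 : ℝ) (2 * π), Complex.exp (I * (k.1 * t))) *
      ((2 * (π : ℂ))⁻¹ * ∫ t in Set.Icc (0 : ℝ) (2 * π), Complex.exp (I * (k.2 * t))) := by
  have h := setIntegral_prod_mul (μ := volume) (ν := volume)
    (fun t : ℝ => Complex.exp (I * (k.1 * t))) (fun t : ℝ => Complex.exp (I * (k.2 * t)))
    (Set.Icc 0 (2 * π)) (Set.Icc 0 (2 * π))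
  rw [← Measure.volume_eq_prod] at h
  simp only [boxMean, trigMonomial_apply, h]
  ring

lemma gridMean_trigMonomial_eq_boxMean {N₁ N₂ : ℕ} {k : ℤ × ℤ} (h₁ : |k.1| < N₁)
    (h₂ : |k.2| < N₂) : gridMean N₁ N₂ (trigMonomial k) = boxMean (trigMonomial k) := by
  rw [gridMean_trigMonomial, boxMean_trigMonomial, average_range_exp_I_int_mul h₁,
    average_range_exp_I_int_mul h₂, average_setIntegral_exp_I_int_mul,
    average_setIntegral_exp_I_int_mul]

lemma norm_gridMean_le {N₁ N₂ : ℕ} {φ : ℝ × ℝ → ℂ} {B : ℝ} (hφ : ∀ ω, ‖φ ω‖ ≤ B) :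
    ‖gridMean N₁ N₂ φ‖ ≤ B := by
  have hB : 0 ≤ B := (norm_nonneg _).trans (hφ 0)
  have hsum : ‖∑ j₁ ∈ range N₁, ∑ j₂ ∈ range N₂, φ (2 * π * j₁ / N₁, 2 * π * j₂ / N₂)‖ ≤
      N₁ * N₂ * B :=
    (norm_sum_le_of_le _ fun _ _ => norm_sum_le_of_le _ fun _ _ => hφ _).trans_eq
      (by simp [mul_assoc])
  rw [gridMean, norm_mul, norm_inv, norm_mul, Complex.norm_natCast, Complex.norm_natCast]
  rcases eq_or_ne ((N₁ : ℝ) * N₂) 0 with h0 | h0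
  · simp [h0, hB]
  · calc ((N₁ : ℝ) * N₂)⁻¹ * ‖_‖ ≤ ((N₁ : ℝ) * N₂)⁻¹ * (N₁ * N₂ * B) := by gcongr
      _ = B := inv_mul_cancel_left₀ h0 B

lemma norm_boxMean_le {φ : ℝ × ℝ → ℂ} {B : ℝ} (hφ : ∀ ω, ‖φ ω‖ ≤ B) : ‖boxMean φ‖ ≤ B := by
  have hvol : volume.real (Set.Icc (0 : ℝ) (2 * π) ×ˢ Set.Icc (0 : ℝ) (2 * π)) = 4 * π ^ 2 := by
    rw [Measure.volume_eq_prod, measureReal_prod_prod, Real.volume_real_Icc_of_le (by positivity)]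
    ring
  have hint := norm_setIntegral_le_of_norm_le_const (μ := volume) (s := Set.Icc (0 : ℝ) (2 * π) ×ˢ
    Set.Icc (0 : ℝ) (2 * π)) (isCompact_Icc.prod isCompact_Icc).measure_lt_top fun ω _ => hφ ω
  rw [hvol] at hint
  rw [boxMean, norm_mul, norm_inv, show ‖4 * (π : ℂ) ^ 2‖ = 4 * π ^ 2 by simp]
  calc (4 * π ^ 2)⁻¹ * ‖_‖ ≤ (4 * π ^ 2)⁻¹ * (B * (4 * π ^ 2)) := by gcongr
    _ = B := by field_simp

def trigPoly (d₁ d₂ : ℕ) : Submodule ℂ (ℝ × ℝ → ℂ) :=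
  Submodule.span ℂ (trigMonomial '' {k | |k.1| ≤ d₁ ∧ |k.2| ≤ d₂})

lemma trigMonomial_mem_trigPoly {d₁ d₂ : ℕ} {k : ℤ × ℤ} (h₁ : |k.1| ≤ d₁) (h₂ : |k.2| ≤ d₂) :
    trigMonomial k ∈ trigPoly d₁ d₂ :=
  Submodule.subset_span ⟨k, ⟨h₁, h₂⟩, rfl⟩

lemma trigPoly_mono {d₁ d₂ e₁ e₂ : ℕ} (h₁ : d₁ ≤ e₁) (h₂ : d₂ ≤ e₂) :
    trigPoly d₁ d₂ ≤ trigPoly e₁ e₂ :=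
  Submodule.span_mono <| Set.image_mono fun _ hk =>
    ⟨hk.1.trans (by exact_mod_cast h₁), hk.2.trans (by exact_mod_cast h₂)⟩

lemma trigPoly_mul_le (a₁ a₂ b₁ b₂ : ℕ) :
    trigPoly a₁ a₂ * trigPoly b₁ b₂ ≤ trigPoly (a₁ + b₁) (a₂ + b₂) := by
  rw [trigPoly, trigPoly, Submodule.span_mul_span]
  refine Submodule.span_mono (Set.mul_subset_iff.2 ?_)
  rintro _ ⟨k, hk, rfl⟩ _ ⟨m, hm, rfl⟩
  refine ⟨k + m, ⟨?_, ?_⟩, trigMonomial_add k m⟩ <;> push_cast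
  · exact (abs_add_le _ _).trans (add_le_add hk.1 hm.1)
  · exact (abs_add_le _ _).trans (add_le_add hk.2 hm.2)

lemma mul_mem_trigPoly {a₁ a₂ b₁ b₂ : ℕ} {φ ψ : ℝ × ℝ → ℂ} (hφ : φ ∈ trigPoly a₁ a₂)
    (hψ : ψ ∈ trigPoly b₁ b₂) : φ * ψ ∈ trigPoly (a₁ + b₁) (a₂ + b₂) :=
  trigPoly_mul_le a₁ a₂ b₁ b₂ (Submodule.mul_mem_mul hφ hψ)

lemma one_mem_trigPoly (d₁ d₂ : ℕ) : (1 : ℝ × ℝ → ℂ) ∈ trigPoly d₁ d₂ :=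
  trigMonomial_zero ▸ trigMonomial_mem_trigPoly (by simp) (by simp)

lemma pow_mem_trigPoly {d₁ d₂ : ℕ} {φ : ℝ × ℝ → ℂ} (hφ : φ ∈ trigPoly d₁ d₂) :
    ∀ r : ℕ, φ ^ r ∈ trigPoly (r * d₁) (r * d₂)
  | 0 => by simpa using one_mem_trigPoly 0 0
  | r + 1 => by
    rw [pow_succ, add_one_mul, add_one_mul]
    exact mul_mem_trigPoly (pow_mem_trigPoly hφ r) hφ

lemma continuous_of_mem_trigPoly {d₁ d₂ : ℕ} {φ : ℝ × ℝ → ℂ} (hφ : φ ∈ trigPoly d₁ d₂) :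
    Continuous φ := by
  induction hφ using Submodule.span_induction with
  | mem _ hx => obtain ⟨k, -, rfl⟩ := hx; exact continuous_trigMonomial k
  | zero => exact continuous_const
  | add _ _ _ _ hx hy => exact hx.add hy
  | smul c _ _ hx => exact hx.const_smul c

lemma gridMean_eq_boxMean_of_mem_trigPoly {d₁ d₂ N₁ N₂ : ℕ} (h₁ : d₁ < N₁) (h₂ : d₂ < N₂)
    {φ : ℝ × ℝ → ℂ} (hφ : φ ∈ trigPoly d₁ d₂) : gridMean N₁ N₂ φ = boxMean φ := by
  induction hφ using Submodule.span_induction with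
  | mem _ hx =>
    obtain ⟨k, hk, rfl⟩ := hx
    exact gridMean_trigMonomial_eq_boxMean (hk.1.trans_lt (by exact_mod_cast h₁))
      (hk.2.trans_lt (by exact_mod_cast h₂))
  | zero => simp [gridMean, boxMean]
  | add x y hx hy ihx ihy =>
    rw [gridMean_add, boxMean_add (integrableOn_box (continuous_of_mem_trigPoly hx))
      (integrableOn_box (continuous_of_mem_trigPoly hy)), ihx, ihy]
  | smul c x _ ih => rw [gridMean_smul, boxMean_smul, ih]

lemma inv_eq_geom_sum_add {K : Type*} [Field K] {z : K} (hz : z ≠ 0) (M : K) (R : ℕ) :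
    z⁻¹ = M⁻¹ * ∑ r ∈ range R, (1 - M⁻¹ * z) ^ r + (1 - M⁻¹ * z) ^ R / z := by
  have h := mul_neg_geom_sum (1 - M⁻¹ * z) R
  rw [sub_sub_cancel] at h
  apply mul_left_cancel₀ hz
  rw [mul_add, mul_inv_cancel₀ hz, mul_div_assoc', mul_div_cancel_left₀ _ hz]
  linear_combination -h

lemma norm_one_sub_inv_mul_le {z : ℂ} {δ M : ℝ} (hz : z.im = 0) (hδ : 0 < δ) (hδz : δ ≤ z.re)
    (hzM : z.re ≤ M) : ‖1 - (M : ℂ)⁻¹ * z‖ ≤ 1 - δ / M := by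
  have hM : 0 < M := hδ.trans_le (hδz.trans hzM)
  have hz' : z = (z.re : ℂ) := Complex.ext rfl (by simp [hz])
  rw [hz', ← Complex.ofReal_inv, ← Complex.ofReal_mul, ← Complex.ofReal_one, ← Complex.ofReal_sub,
    Complex.norm_real, Real.norm_eq_abs, abs_le, ← div_eq_inv_mul]
  constructor
  · have : z.re / M ≤ 1 := (div_le_one hM).2 hzM
    have : δ / M ≤ 1 := (div_le_one hM).2 (hδz.trans hzM)
    linarith
  · have : δ / M ≤ z.re / M := by gcongr
    linarith

lemma exists_norm_one_sub_inv_mul_le {α : Type*} [Nonempty α] {g : α → ℂ} {δ B : ℝ}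
    (hδ : 0 < δ) (hreal : ∀ x, (g x).im = 0) (hlb : ∀ x, δ ≤ (g x).re) (hub : ∀ x, (g x).re ≤ B) :
    ∃ (M : ℂ) (θ : ℝ), 0 < θ ∧ θ < 1 ∧ ∀ x, ‖1 - M⁻¹ * g x‖ ≤ θ := by
  obtain ⟨x₀⟩ := ‹Nonempty α›
  have hB : 0 < B := hδ.trans_le ((hlb x₀).trans (hub x₀))
  refine ⟨(B + δ : ℝ), 1 - δ / (B + δ), ?_, ?_, fun x =>
    norm_one_sub_inv_mul_le (hreal x) hδ (hlb x) (by linarith [hub x])⟩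
  · rw [sub_pos, div_lt_one (by positivity)]; linarith
  · linarith [div_pos hδ (add_pos hB hδ)]

lemma exists_pow_div_le_div_pow {θ : ℝ} (hθ₀ : 0 < θ) (hθ₁ : θ < 1) {D : ℕ} (hD : 0 < D)
    (p : ℕ) : ∃ C, ∀ N : ℕ, 0 < N → θ ^ (N / D) ≤ C / (N : ℝ) ^ p := by
  have hlim : Tendsto (fun n : ℕ => (n : ℝ) ^ p * θ ^ n) atTop (𝓝 0) :=
    tendsto_pow_const_mul_const_pow_of_abs_lt_one p (by rwa [abs_of_pos hθ₀])
  obtain ⟨C, hC⟩ := (hlim.comp (tendsto_add_atTop_nat 1)).bddAbove_range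
  refine ⟨D ^ p * (θ⁻¹ * C), fun N hN => ?_⟩
  have hND : (N : ℝ) ≤ D * (N / D + 1 : ℕ) := by exact_mod_cast (Nat.lt_mul_div_succ N hD).le
  rw [le_div_iff₀ (by positivity)]
  calc θ ^ (N / D) * (N : ℝ) ^ p ≤ θ ^ (N / D) * (D * (N / D + 1 : ℕ)) ^ p := by gcongr
    _ = D ^ p * (θ⁻¹ * (((N / D + 1 : ℕ) : ℝ) ^ p * θ ^ (N / D + 1))) := by
      rw [mul_pow, pow_succ]; field_simp
    _ ≤ D ^ p * (θ⁻¹ * C) := by gcongr; exact hC ⟨N / D, rfl⟩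

lemma norm_boxMean_sub_gridMean_inv_mul_le {g : ℝ × ℝ → ℂ} {d₁ d₂ : ℕ}
    (hg : g ∈ trigPoly d₁ d₂) {δ θ : ℝ} (hδ : 0 < δ) (hgδ : ∀ ω, δ ≤ ‖g ω‖) {M : ℂ}
    (hθ : ∀ ω, ‖1 - M⁻¹ * g ω‖ ≤ θ) {k : ℤ × ℤ} {a₁ a₂ R N₁ N₂ : ℕ} (hk₁ : |k.1| ≤ a₁)
    (hk₂ : |k.2| ≤ a₂) (h₁ : R * d₁ + a₁ < N₁) (h₂ : R * d₂ + a₂ < N₂) :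
    ‖boxMean (fun ω => (g ω)⁻¹ * trigMonomial k ω) -
      gridMean N₁ N₂ (fun ω => (g ω)⁻¹ * trigMonomial k ω)‖ ≤ 2 * (θ ^ R / δ) := by
  have hg₀ : ∀ ω, g ω ≠ 0 := fun ω h0 => by linarith [hgδ ω, norm_eq_zero.2 h0]
  set u : ℝ × ℝ → ℂ := 1 - M⁻¹ • g
  have hu : u ∈ trigPoly d₁ d₂ :=
    Submodule.sub_mem _ (one_mem_trigPoly _ _) (Submodule.smul_mem _ _ hg)
  set P := (M⁻¹ • ∑ r ∈ range R, u ^ r) * trigMonomial k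
  have hP : P ∈ trigPoly (R * d₁ + a₁) (R * d₂ + a₂) := by
    refine mul_mem_trigPoly (Submodule.smul_mem _ _ (Submodule.sum_mem _ fun r hr => ?_))
      (trigMonomial_mem_trigPoly hk₁ hk₂)
    have hrR : r ≤ R := (mem_range.1 hr).le
    exact trigPoly_mono (Nat.mul_le_mul_right _ hrR) (Nat.mul_le_mul_right _ hrR)
      (pow_mem_trigPoly hu r)
  set ρ : ℝ × ℝ → ℂ := fun ω => u ω ^ R / g ω * trigMonomial k ω
  have hsplit : (fun ω => (g ω)⁻¹ * trigMonomial k ω) = P + ρ := by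
    ext ω
    simp only [P, ρ, u, Pi.add_apply, Pi.mul_apply, Pi.smul_apply, Finset.sum_apply, Pi.pow_apply,
      Pi.sub_apply, Pi.one_apply, smul_eq_mul, inv_eq_geom_sum_add (hg₀ ω) M R]
    ring
  have hρ_cont : Continuous ρ :=
    (((continuous_of_mem_trigPoly hu).pow R).div (continuous_of_mem_trigPoly hg) hg₀).mul
      (continuous_trigMonomial k)
  have hρ : ∀ ω, ‖ρ ω‖ ≤ θ ^ R / δ := fun ω => by
    simp only [ρ, norm_mul, norm_div, norm_pow, norm_trigMonomial, mul_one]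
    have hθ₀ : 0 ≤ θ := (norm_nonneg _).trans (hθ ω)
    gcongr
    · exact hθ ω
    · exact hgδ ω
  rw [hsplit, gridMean_add, boxMean_add (integrableOn_box (continuous_of_mem_trigPoly hP))
    (integrableOn_box hρ_cont), gridMean_eq_boxMean_of_mem_trigPoly h₁ h₂ hP,
    add_sub_add_left_eq_sub]
  calc _ ≤ ‖boxMean ρ‖ + ‖gridMean N₁ N₂ ρ‖ := norm_sub_le _ _
    _ ≤ θ ^ R / δ + θ ^ R / δ := add_le_add (norm_boxMean_le hρ) (norm_gridMean_le hρ)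
    _ = 2 * (θ ^ R / δ) := by ring

lemma sum_mul_trigMonomial_mem_trigPoly (S : Finset (ℤ × ℤ)) (c : ℤ × ℤ → ℂ) :
    (fun ω => ∑ h ∈ S, c h * trigMonomial h ω) ∈
      trigPoly (S.sup fun h => h.1.natAbs) (S.sup fun h => h.2.natAbs) := by
  convert Submodule.sum_mem _ fun h hS => Submodule.smul_mem _ (c h) <|
    trigMonomial_mem_trigPoly (k := h)
      (by rw [Int.abs_eq_natAbs]; exact_mod_cast le_sup (f := fun h : ℤ × ℤ => h.1.natAbs) hS)
      (by rw [Int.abs_eq_natAbs]; exact_mod_cast le_sup (f := fun h : ℤ × ℤ => h.2.natAbs) hS)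
    using 1
  ext ω
  simp [Finset.sum_apply]

lemma norm_sum_mul_trigMonomial_le (S : Finset (ℤ × ℤ)) (c : ℤ × ℤ → ℂ) (ω : ℝ × ℝ) :
    ‖∑ h ∈ S, c h * trigMonomial h ω‖ ≤ ∑ h ∈ S, ‖c h‖ :=
  norm_sum_le_of_le _ fun h _ => by rw [norm_mul, norm_trigMonomial, mul_one]

lemma setIntegral_mul_exp_eq_boxMean (f : ℝ × ℝ → ℂ) (h : ℤ × ℤ) :
    ∫ ω in Set.Icc (0 : ℝ) (2 * π) ×ˢ Set.Icc (0 : ℝ) (2 * π),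
      f ω * Complex.exp (I * (ω.1 * h.1 + ω.2 * h.2)) =
      4 * (π : ℂ) ^ 2 * boxMean (fun ω => f ω * trigMonomial h ω) := by
  have hπ : 4 * (π : ℂ) ^ 2 ≠ 0 := by simp [pi_ne_zero]
  rw [boxMean, mul_inv_cancel_left₀ hπ]
  congr 1
  ext ω
  simp only [trigMonomial]
  push_cast
  ring_nf

lemma riemannSum_mul_exp_eq_gridMean (f : ℝ × ℝ → ℂ) (h : ℤ × ℤ) (n₁ n₂ J : ℕ) :
    4 * (π : ℂ) ^ 2 / ((n₁ : ℂ) * (n₂ : ℂ) * (J : ℂ) ^ 2) *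
      ∑ j₁ ∈ range (n₁ * J), ∑ j₂ ∈ range (n₂ * J),
        f (2 * π * j₁ / (n₁ * J), 2 * π * j₂ / (n₂ * J)) *
          Complex.exp (I * (2 * π * j₁ * h.1 / (n₁ * J) + 2 * π * j₂ * h.2 / (n₂ * J))) =
      4 * (π : ℂ) ^ 2 * gridMean (n₁ * J) (n₂ * J) (fun ω => f ω * trigMonomial h ω) := by
  rw [gridMean, ← mul_assoc]
  congr 1
  · push_cast; ring
  refine sum_congr rfl fun j₁ _ => sum_congr rfl fun j₂ _ => ?_
  simp only [trigMonomial]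
  push_cast
  ring_nf

end

/-- Paper's Theorem 1: let `S ⊂ ℤ²` be a finite neighborhood set and `η` its coefficients,
such that the trigonometric sum `g(ω) = Σ_{h∈S} η(h) exp(i ω·h)` is real-valued and bounded
below by `δ > 0` (so the spectral density `f = 1/g` is bounded above). Let
`K(h) = ∫_{[0,2π]²} f(ω) exp(i ω·h) dω` be the covariances and `Kapprox h n₁ n₂ J` their
Riemann-sum approximation over the grid of Fourier frequencies of size `(n₁J, n₂J)`. Then
for every `p ≥ 1` there exists `C_p < ∞` such that for all `1 ≤ n₁ ≤ n₂`, `J ≥ 2`, and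
lags `h` with `|h₁| ≤ n₁`, `|h₂| ≤ n₂`, `|K(h) − Kapprox(h;J,n)| ≤ C_p/(n₁J)^p`. -/
theorem gmrf_covariance_fft_approximation_error
    (S : Finset (ℤ × ℤ)) (η : ℤ × ℤ → ℝ) (δ : ℝ) (hδ : 0 < δ)
    (g : ℝ × ℝ → ℂ)
    (hg : ∀ ω : ℝ × ℝ, g ω =
      ∑ h ∈ S, (η h : ℂ) * Complex.exp (Complex.I * ((h.1 : ℝ) * ω.1 + (h.2 : ℝ) * ω.2)))
    (hreal : ∀ ω : ℝ × ℝ, (g ω).im = 0)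
    (hlb : ∀ ω : ℝ × ℝ, δ ≤ (g ω).re)
    (K : ℤ × ℤ → ℂ)
    (hK : ∀ h : ℤ × ℤ, K h =
      ∫ ω in Set.Icc (0 : ℝ) (2 * π) ×ˢ Set.Icc (0 : ℝ) (2 * π),
        (g ω)⁻¹ * Complex.exp (Complex.I * (ω.1 * h.1 + ω.2 * h.2)))
    (Kapprox : ℤ × ℤ → ℕ → ℕ → ℕ → ℂ)
    (hKa : ∀ (h : ℤ × ℤ) (n₁ n₂ J : ℕ), Kapprox h n₁ n₂ J =
      (4 * (π : ℂ) ^ 2 / ((n₁ : ℂ) * (n₂ : ℂ) * (J : ℂ) ^ 2)) *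
        ∑ j₁ ∈ Finset.range (n₁ * J), ∑ j₂ ∈ Finset.range (n₂ * J),
          (g (2 * π * j₁ / (n₁ * J), 2 * π * j₂ / (n₂ * J)))⁻¹ *
            Complex.exp (Complex.I *
              (2 * π * j₁ * h.1 / (n₁ * J) + 2 * π * j₂ * h.2 / (n₂ * J)))) :
    ∀ p : ℕ, 1 ≤ p → ∃ C : ℝ, ∀ n₁ n₂ J : ℕ, 1 ≤ n₁ → n₁ ≤ n₂ → 2 ≤ J →
      ∀ h : ℤ × ℤ, |h.1| ≤ (n₁ : ℤ) → |h.2| ≤ (n₂ : ℤ) →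
        ‖K h - Kapprox h n₁ n₂ J‖ ≤ C / ((n₁ : ℝ) * J) ^ p := by
  intro p _
  obtain ⟨d₁, d₂, hg_mem⟩ : ∃ d₁ d₂, g ∈ trigPoly d₁ d₂ :=
    ⟨_, _, funext hg ▸ sum_mul_trigMonomial_mem_trigPoly S (fun h => (η h : ℂ))⟩
  have hgB : ∀ ω, (g ω).re ≤ ∑ h ∈ S, ‖(η h : ℂ)‖ := fun ω =>
    (Complex.re_le_norm _).trans (hg ω ▸ norm_sum_mul_trigMonomial_le S _ ω)
  have hgδ : ∀ ω, δ ≤ ‖g ω‖ := fun ω => (hlb ω).trans (Complex.re_le_norm _)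
  obtain ⟨M, θ, hθ₀, hθ₁, hθ⟩ := exists_norm_one_sub_inv_mul_le hδ hreal hlb hgB
  obtain ⟨C, hC⟩ := exists_pow_div_le_div_pow hθ₀ hθ₁ (D := 4 * (d₁ + d₂ + 1)) (by positivity) p
  refine ⟨4 * π ^ 2 * (2 * (C / δ)), fun n₁ n₂ J hn₁ hn₁₂ hJ h hh₁ hh₂ => ?_⟩
  set R := n₁ * J / (4 * (d₁ + d₂ + 1))
  have hR : 4 * (d₁ + d₂ + 1) * R ≤ n₁ * J := Nat.mul_div_le _ _
  have hdeg₁ : R * d₁ + n₁ < n₁ * J := by nlinarith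
  have hdeg₂ : R * d₂ + n₂ < n₂ * J := by nlinarith [Nat.mul_le_mul_right J hn₁₂]
  rw [hK, hKa, setIntegral_mul_exp_eq_boxMean (fun ω => (g ω)⁻¹), riemannSum_mul_exp_eq_gridMean
    (fun ω => (g ω)⁻¹), ← mul_sub, norm_mul, show ‖4 * (π : ℂ) ^ 2‖ = 4 * π ^ 2 by simp]
  calc 4 * π ^ 2 * ‖_‖ ≤ 4 * π ^ 2 * (2 * (θ ^ R / δ)) := by
        gcongr
        exact norm_boxMean_sub_gridMean_inv_mul_le hg_mem hδ hgδ hθ hh₁ hh₂ hdeg₁ hdeg₂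
    _ ≤ 4 * π ^ 2 * (2 * (C / ((n₁ * J : ℕ) : ℝ) ^ p / δ)) := by
        gcongr; exact hC _ (by positivity)
    _ = _ := by push_cast; ring
end

section
/- Let p ≥ 3 be an integer, M ≥ 0, and let K : ℤ² → ℂ satisfy |K(r)| ≤ M·‖r‖^{−p} for all r ≠ 0, where ‖·‖ is the Euclidean norm on ℤ² ⊂ ℝ². Then there exists a constant C < ∞ depending only on M and p (one may take C = M·(3·2^p + 4·Σ_{j=1}^∞ (2j+1)·j^{−p})) such that for all positive integers n₁ ≤ n₂, all integers J ≥ 2, and all h ∈ ℤ² with |h₁| ≤ n₁ and |h₂| ≤ n₂, the tail sum satisfies Σ_{k∈ℤ², k≠0} |K(h₁ + Jn₁k₁, h₂ + Jn₂k₂)| ≤ C·(Jn₁)^{−p}. (The central estimate in the proof of the paper's Theorem 1.) -/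
/-- The central estimate in the proof of the paper's Theorem 1: if `p ≥ 3`, `M ≥ 0`, and
`K : ℤ² → ℂ` satisfies `|K(r)| ≤ M‖r‖^{−p}` for all `r ≠ 0` (Euclidean norm), then there
is a constant `C` (depending only on `M` and `p`) such that for all positive integers
`n₁ ≤ n₂`, all integers `J ≥ 2`, and all lags `h` with `|h₁| ≤ n₁`, `|h₂| ≤ n₂`, the
aliasing tail sum satisfies
`Σ_{k≠0} |K(h₁ + Jn₁k₁, h₂ + Jn₂k₂)| ≤ C (Jn₁)^{−p}`. -/
theorem aliasing_tail_sum_bound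
    (p : ℕ) (hp : 3 ≤ p) (M : ℝ) (hM : 0 ≤ M) (K : ℤ × ℤ → ℂ)
    (hK : ∀ r : ℤ × ℤ, r ≠ (0, 0) →
      ‖K r‖ ≤ M * (Real.sqrt ((r.1 : ℝ) ^ 2 + (r.2 : ℝ) ^ 2)) ^ (-(p : ℝ))) :
    ∃ C : ℝ, ∀ n₁ n₂ J : ℤ, 1 ≤ n₁ → n₁ ≤ n₂ → 2 ≤ J →
      ∀ h : ℤ × ℤ, |h.1| ≤ n₁ → |h.2| ≤ n₂ →
        (∑' k : {k : ℤ × ℤ // k ≠ (0, 0)},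
            ‖K (h.1 + J * n₁ * k.1.1, h.2 + J * n₂ * k.1.2)‖) ≤
          C * ((J * n₁ : ℤ) : ℝ) ^ (-(p : ℝ)) := by
  have hq : (2 : ℝ) < (p : ℝ) := by
    have : (3 : ℝ) ≤ (p : ℝ) := by exact_mod_cast hp
    linarith
  -- Summability of the comparison function over ℤ × ℤ
  have hsum2 : Summable (fun k : ℤ × ℤ => (max (|k.1| : ℝ) |k.2|) ^ (-(p : ℝ))) := by
    have h1 := EisensteinSeries.summable_one_div_norm_rpow hq
    have h2 : Summable (fun x : Fin 2 → ℤ =>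
        (max (|x 0| : ℝ) |x 1|) ^ (-(p : ℝ))) := by
      refine h1.congr fun x => ?_
      congr 1
      rw [EisensteinSeries.norm_eq_max_natAbs]
      push_cast [Nat.cast_natAbs]
      simp
    refine ((finTwoArrowEquiv ℤ).summable_iff
      (f := fun k : ℤ × ℤ => (max (|k.1| : ℝ) |k.2|) ^ (-(p : ℝ)))).mp ?_
    refine h2.congr fun x => ?_
    simp [finTwoArrowEquiv]
  have hsum : Summable (fun k : {k : ℤ × ℤ // k ≠ (0, 0)} =>
      (max (|k.1.1| : ℝ) |k.1.2|) ^ (-(p : ℝ))) :=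
    hsum2.subtype _
  set S : ℝ := ∑' k : {k : ℤ × ℤ // k ≠ (0, 0)},
      (max (|k.1.1| : ℝ) |k.1.2|) ^ (-(p : ℝ)) with hS
  refine ⟨M * (2 : ℝ) ^ (p : ℝ) * S, fun n₁ n₂ J hn₁ hn12 hJ h hh1 hh2 => ?_⟩
  set c : ℝ := M * (2 : ℝ) ^ (p : ℝ) * ((J : ℝ) * (n₁ : ℝ)) ^ (-(p : ℝ)) with hc
  have hn₁R : (1 : ℝ) ≤ (n₁ : ℝ) := by exact_mod_cast hn₁
  have hJR : (2 : ℝ) ≤ (J : ℝ) := by exact_mod_cast hJ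
  have hJn₁pos : (0 : ℝ) < (J : ℝ) * (n₁ : ℝ) := by nlinarith
  -- pointwise bound
  have key : ∀ k : {k : ℤ × ℤ // k ≠ (0, 0)},
      ‖K (h.1 + J * n₁ * k.1.1, h.2 + J * n₂ * k.1.2)‖ ≤
        c * (max (|k.1.1| : ℝ) |k.1.2|) ^ (-(p : ℝ)) := by
    rintro ⟨⟨k₁, k₂⟩, hk0⟩
    dsimp only
    set x₁ : ℤ := h.1 + J * n₁ * k₁ with hx₁
    set x₂ : ℤ := h.2 + J * n₂ * k₂ with hx₂
    have hmax1 : (1 : ℤ) ≤ max |k₁| |k₂| := by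
      have hor : k₁ ≠ 0 ∨ k₂ ≠ 0 := by
        by_contra hcon
        push_neg at hcon
        exact hk0 (by simp [Prod.ext_iff, hcon.1, hcon.2])
      rcases hor with hk | hk
      · exact le_max_of_le_left (Int.one_le_abs hk)
      · exact le_max_of_le_right (Int.one_le_abs hk)
    have hmaxR : (1 : ℝ) ≤ max (|(k₁ : ℝ)|) |(k₂ : ℝ)| := by
      have : ((1 : ℤ) : ℝ) ≤ ((max |k₁| |k₂| : ℤ) : ℝ) := by exact_mod_cast hmax1
      push_cast at this
      exact this
    -- lower bound on the Euclidean norm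
    have hlow : ((J : ℝ) * (n₁ : ℝ) / 2) * max (|k₁| : ℝ) |k₂| ≤
        Real.sqrt ((x₁ : ℝ) ^ 2 + (x₂ : ℝ) ^ 2) := by
      rcases le_total (|k₂| : ℤ) |k₁| with hc' | hc'
      · -- max is |k₁|
        have hck : (1 : ℤ) ≤ |k₁| := le_trans hmax1 (by simp [hc'])
        have habs : J * n₁ * |k₁| - |h.1| ≤ |x₁| := by
          have := abs_add_le x₁ (-h.1)
          simp only [hx₁] at this ⊢
          have h2 : |J * n₁ * k₁| = J * n₁ * |k₁| := by
            rw [abs_mul, abs_mul, abs_of_nonneg (by linarith : (0:ℤ) ≤ J),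
              abs_of_nonneg (by linarith : (0:ℤ) ≤ n₁)]
          have h3 : h.1 + J * n₁ * k₁ + -h.1 = J * n₁ * k₁ := by ring
          rw [h3, h2, abs_neg] at this
          linarith
        have hZ : J * n₁ * |k₁| ≤ 2 * |x₁| := by
          nlinarith [mul_nonneg (mul_nonneg (by linarith : (0:ℤ) ≤ J - 2)
              (by linarith : (0:ℤ) ≤ n₁)) (by linarith : (0:ℤ) ≤ |k₁|),
            mul_nonneg (by linarith : (0:ℤ) ≤ n₁) (by linarith : (0:ℤ) ≤ |k₁| - 1)]
        have hR : ((J : ℝ) * (n₁ : ℝ) / 2) * |(k₁ : ℝ)| ≤ |(x₁ : ℝ)| := by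
          have : ((J * n₁ * |k₁| : ℤ) : ℝ) ≤ ((2 * |x₁| : ℤ) : ℝ) := by exact_mod_cast hZ
          push_cast at this
          linarith
        have hmaxeq : max (|k₁| : ℝ) |k₂| = (|k₁| : ℝ) := by
          have : (|k₂| : ℝ) ≤ (|k₁| : ℝ) := by exact_mod_cast hc'
          exact max_eq_left this
        rw [hmaxeq]
        exact hR.trans (Real.abs_le_sqrt (by nlinarith [sq_nonneg ((x₂ : ℝ))] :
          ((x₁ : ℝ)) ^ 2 ≤ (x₁ : ℝ) ^ 2 + (x₂ : ℝ) ^ 2))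
      · -- max is |k₂|
        have hck : (1 : ℤ) ≤ |k₂| := le_trans hmax1 (by simp [hc'])
        have habs : J * n₂ * |k₂| - |h.2| ≤ |x₂| := by
          have := abs_add_le x₂ (-h.2)
          simp only [hx₂] at this ⊢
          have h2 : |J * n₂ * k₂| = J * n₂ * |k₂| := by
            rw [abs_mul, abs_mul, abs_of_nonneg (by linarith : (0:ℤ) ≤ J),
              abs_of_nonneg (by linarith : (0:ℤ) ≤ n₂)]
          have h3 : h.2 + J * n₂ * k₂ + -h.2 = J * n₂ * k₂ := by ring
          rw [h3, h2, abs_neg] at this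
          linarith
        have hZ : J * n₁ * |k₂| ≤ 2 * |x₂| := by
          nlinarith [mul_nonneg (mul_nonneg (by linarith : (0:ℤ) ≤ J - 2)
              (by linarith : (0:ℤ) ≤ n₂)) (by linarith : (0:ℤ) ≤ |k₂|),
            mul_nonneg (by linarith : (0:ℤ) ≤ n₂) (by linarith : (0:ℤ) ≤ |k₂| - 1),
            mul_nonneg (mul_nonneg (by linarith : (0:ℤ) ≤ J)
              (by linarith : (0:ℤ) ≤ n₂ - n₁)) (by linarith : (0:ℤ) ≤ |k₂|)]
        have hR : ((J : ℝ) * (n₁ : ℝ) / 2) * |(k₂ : ℝ)| ≤ |(x₂ : ℝ)| := by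
          have : ((J * n₁ * |k₂| : ℤ) : ℝ) ≤ ((2 * |x₂| : ℤ) : ℝ) := by exact_mod_cast hZ
          push_cast at this
          linarith
        have hmaxeq : max (|k₁| : ℝ) |k₂| = (|k₂| : ℝ) := by
          have : (|k₁| : ℝ) ≤ (|k₂| : ℝ) := by exact_mod_cast hc'
          exact max_eq_right this
        rw [hmaxeq]
        exact hR.trans (Real.abs_le_sqrt (by nlinarith [sq_nonneg ((x₁ : ℝ))] :
          ((x₂ : ℝ)) ^ 2 ≤ (x₁ : ℝ) ^ 2 + (x₂ : ℝ) ^ 2))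
    have hposlb : (0 : ℝ) < ((J : ℝ) * (n₁ : ℝ) / 2) * max (|k₁| : ℝ) |k₂| := by
      nlinarith
    have hr0 : ((x₁, x₂) : ℤ × ℤ) ≠ (0, 0) := by
      intro hcontra
      rw [Prod.ext_iff] at hcontra
      obtain ⟨e1, e2⟩ := hcontra
      simp only at e1 e2
      rw [e1, e2] at hlow
      simp at hlow
      nlinarith
    have hKb := hK (x₁, x₂) hr0
    refine le_trans hKb ?_
    have step1 : (Real.sqrt ((x₁ : ℝ) ^ 2 + (x₂ : ℝ) ^ 2)) ^ (-(p : ℝ)) ≤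
        (((J : ℝ) * (n₁ : ℝ) / 2) * max (|k₁| : ℝ) |k₂|) ^ (-(p : ℝ)) :=
      Real.rpow_le_rpow_of_nonpos hposlb hlow (neg_nonpos.mpr (by positivity))
    have step2 : (((J : ℝ) * (n₁ : ℝ) / 2) * max (|k₁| : ℝ) |k₂|) ^ (-(p : ℝ)) =
        (2 : ℝ) ^ (p : ℝ) * ((J : ℝ) * (n₁ : ℝ)) ^ (-(p : ℝ)) *
          (max (|k₁| : ℝ) |k₂|) ^ (-(p : ℝ)) := by
      rw [Real.mul_rpow (by positivity) (by positivity),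
        Real.div_rpow (by positivity) (by norm_num) ,
        Real.rpow_neg (by norm_num : (0:ℝ) ≤ 2)]
      rw [div_eq_mul_inv, inv_inv]
      ring
    calc M * (Real.sqrt ((x₁ : ℝ) ^ 2 + (x₂ : ℝ) ^ 2)) ^ (-(p : ℝ))
        ≤ M * ((((J : ℝ) * (n₁ : ℝ) / 2) * max (|k₁| : ℝ) |k₂|) ^ (-(p : ℝ))) :=
          mul_le_mul_of_nonneg_left step1 hM
      _ = c * (max (|k₁| : ℝ) |k₂|) ^ (-(p : ℝ)) := by rw [step2, hc]; ring
  have hsumc : Summable (fun k : {k : ℤ × ℤ // k ≠ (0, 0)} =>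
      c * (max (|k.1.1| : ℝ) |k.1.2|) ^ (-(p : ℝ))) := hsum.mul_left c
  have hf : Summable (fun k : {k : ℤ × ℤ // k ≠ (0, 0)} =>
      ‖K (h.1 + J * n₁ * k.1.1, h.2 + J * n₂ * k.1.2)‖) :=
    Summable.of_nonneg_of_le (fun k => norm_nonneg _) key hsumc
  calc (∑' k : {k : ℤ × ℤ // k ≠ (0, 0)},
          ‖K (h.1 + J * n₁ * k.1.1, h.2 + J * n₂ * k.1.2)‖)
      ≤ ∑' k : {k : ℤ × ℤ // k ≠ (0, 0)},
          c * (max (|k.1.1| : ℝ) |k.1.2|) ^ (-(p : ℝ)) := Summable.tsum_le_tsum key hf hsumc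
    _ = c * S := by rw [tsum_mul_left]
    _ = M * (2 : ℝ) ^ (p : ℝ) * S * ((J * n₁ : ℤ) : ℝ) ^ (-(p : ℝ)) := by
        rw [hc]; push_cast; ring
end
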